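/- arXiv:2204.14080 — 3 statements merged into one kernel-verified Lean document; each statement's English description precedes it below -/
import Mathlib

section
/- Let Γ be an even Artin graph with Artin group G, and let A, B be subsets of the vertex set V. Then the intersection of the standard parabolic subgroups G_A and G_B equals G_{A ∩ B}. -/
/-- An Artin graph: a simplicial graph with even/arbitrary labels; `m u v = 0`
means `u` and `v` are not joined by an edge, otherwise `m u v ≥ 2` is the label. -/
structure ArtinGraph (V : Type) where
  m : V → V → ℕ
  symm : ∀ u v, m u v = m v u
  loopless : ∀ v, m v v = 0
  ne_one : ∀ u v, m u v ≠ 1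

namespace ArtinGraph

variable {V : Type}

/-- `word u v n` is the prefix of length `n` of the alternating word `uvuv…`. -/
def word : V → V → ℕ → FreeGroup V
  | _, _, 0 => 1
  | u, v, n + 1 => FreeGroup.of u * word v u n

/-- The Artin relations of the graph. -/
def rels (Γ : ArtinGraph V) : Set (FreeGroup V) :=
  {r | ∃ u v, Γ.m u v ≠ 0 ∧ r = word u v (Γ.m u v) * (word v u (Γ.m u v))⁻¹}

/-- The Artin group of an Artin graph. -/
def ArtinGroup (Γ : ArtinGraph V) : Type := PresentedGroup Γ.rels

instance (Γ : ArtinGraph V) : Group Γ.ArtinGroup :=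
  inferInstanceAs (Group (PresentedGroup Γ.rels))

/-- The generator of the Artin group corresponding to a vertex. -/
def gen (Γ : ArtinGraph V) (v : V) : Γ.ArtinGroup := PresentedGroup.of v

/-- The standard parabolic subgroup on a set `S` of vertices. -/
def std (Γ : ArtinGraph V) (S : Set V) : Subgroup Γ.ArtinGroup :=
  Subgroup.closure (Γ.gen '' S)

/-- The conjugate `g H g⁻¹` of a subgroup. -/
def conjP {G : Type*} [Group G] (g : G) (H : Subgroup G) : Subgroup G :=
  H.map (MulAut.conj g).toMonoidHom

/-- A parabolic subgroup is a conjugate of a standard parabolic subgroup. -/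
def IsParabolic (Γ : ArtinGraph V) (P : Subgroup Γ.ArtinGroup) : Prop :=
  ∃ (S : Set V) (g : Γ.ArtinGroup), P = conjP g (Γ.std S)

/-- An Artin graph is even if all labels are even. -/
def IsEven (Γ : ArtinGraph V) : Prop := ∀ u v, Even (Γ.m u v)

/-- The FC condition for even Artin graphs: in every triangle at least two of
the three labels are equal to `2`. -/
def IsFC (Γ : ArtinGraph V) : Prop :=
  ∀ u v w, Γ.m u v ≠ 0 → Γ.m v w ≠ 0 → Γ.m w u ≠ 0 →
    (Γ.m u v = 2 ∧ Γ.m v w = 2) ∨ (Γ.m v w = 2 ∧ Γ.m w u = 2) ∨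
      (Γ.m u v = 2 ∧ Γ.m w u = 2)

/-- The link of a vertex. -/
def lk (Γ : ArtinGraph V) (x : V) : Set V := {u | Γ.m x u ≠ 0}

/-- The star of a vertex. -/
def star (Γ : ArtinGraph V) (x : V) : Set V := insert x (Γ.lk x)

end ArtinGraph

/-!
Killing the generators outside `A` is compatible with the relations of an even Artin group,
because an even relation `(uv)^k = (vu)^k` becomes trivially true as soon as one side of each
product is `1`. This gives a retraction `ρ_A : G → G_A`. An element `g ∈ G_A ∩ G_B` is fixed
by `ρ_A`, while `ρ_A` maps `G_B` into `G_{A ∩ B}`.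
-/

namespace ArtinGraph

variable {V : Type} (Γ : ArtinGraph V)

theorem map_word_two_mul {G : Type*} [Group G] (φ : FreeGroup V →* G) (u v : V) (k : ℕ) :
    φ (word u v (2 * k)) = (φ (.of u) * φ (.of v)) ^ k := by
  induction k generalizing u v with
  | zero => simp [word]
  | succ k ih =>
    rw [show 2 * (k + 1) = 2 * k + 1 + 1 by ring]
    simp only [word, map_mul, ih, pow_succ']
    group

theorem gen_mul_gen_pow_comm (hEven : Γ.IsEven) {u v : V} (huv : Γ.m u v ≠ 0) :
    (Γ.gen u * Γ.gen v) ^ (Γ.m u v / 2) = (Γ.gen v * Γ.gen u) ^ (Γ.m u v / 2) := by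
  have hrel := PresentedGroup.one_of_mem (show _ ∈ Γ.rels from ⟨u, v, huv, rfl⟩)
  rw [map_mul, map_inv, mul_inv_eq_one, ← Nat.two_mul_div_two_of_even (hEven u v),
    map_word_two_mul, map_word_two_mul] at hrel
  exact hrel

def lift (hEven : Γ.IsEven) {G : Type*} [Group G] (f : V → G)
    (hf : ∀ u v, Γ.m u v ≠ 0 → (f u * f v) ^ (Γ.m u v / 2) = (f v * f u) ^ (Γ.m u v / 2)) :
    Γ.ArtinGroup →* G :=
  PresentedGroup.toGroup (f := f) <| by
    rintro _ ⟨u, v, huv, rfl⟩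
    rw [map_mul, map_inv, mul_inv_eq_one, ← Nat.two_mul_div_two_of_even (hEven u v),
      map_word_two_mul, map_word_two_mul]
    simpa using hf u v huv

@[simp]
theorem lift_gen (hEven : Γ.IsEven) {G : Type*} [Group G] (f : V → G)
    (hf : ∀ u v, Γ.m u v ≠ 0 → (f u * f v) ^ (Γ.m u v / 2) = (f v * f u) ^ (Γ.m u v / 2))
    (v : V) :
    Γ.lift hEven f hf (Γ.gen v) = f v :=
  PresentedGroup.toGroup.of _

open Classical in
/-- The retraction `ρ_S : G → G_S`, viewed as an endomorphism of `G`. -/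
noncomputable def retraction (hEven : Γ.IsEven) (S : Set V) : Γ.ArtinGroup →* Γ.ArtinGroup :=
  Γ.lift hEven (fun v => if v ∈ S then Γ.gen v else 1) <| by
    intro u v huv
    by_cases hu : u ∈ S <;> by_cases hv : v ∈ S <;>
      simp [hu, hv, gen_mul_gen_pow_comm Γ hEven huv]

theorem retraction_gen_of_mem (hEven : Γ.IsEven) {S : Set V} {v : V} (hv : v ∈ S) :
    Γ.retraction hEven S (Γ.gen v) = Γ.gen v := by
  simp [retraction, hv]

theorem retraction_gen_of_notMem (hEven : Γ.IsEven) {S : Set V} {v : V} (hv : v ∉ S) :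
    Γ.retraction hEven S (Γ.gen v) = 1 := by
  simp [retraction, hv]

theorem retraction_apply_of_mem_std (hEven : Γ.IsEven) {S : Set V} {g : Γ.ArtinGroup}
    (hg : g ∈ Γ.std S) : Γ.retraction hEven S g = g := by
  refine MonoidHom.eqOn_closure (g := MonoidHom.id _) ?_ hg
  rintro _ ⟨v, hv, rfl⟩
  exact Γ.retraction_gen_of_mem hEven hv

theorem std_mono {S T : Set V} (h : S ⊆ T) : Γ.std S ≤ Γ.std T :=
  Subgroup.closure_mono (Set.image_mono h)

theorem map_retraction_std_le (hEven : Γ.IsEven) (S T : Set V) :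
    (Γ.std T).map (Γ.retraction hEven S) ≤ Γ.std (S ∩ T) := by
  rw [std, MonoidHom.map_closure, Subgroup.closure_le]
  rintro _ ⟨_, ⟨v, hvT, rfl⟩, rfl⟩
  by_cases hvS : v ∈ S
  · rw [Γ.retraction_gen_of_mem hEven hvS]
    exact Subgroup.subset_closure ⟨v, ⟨hvS, hvT⟩, rfl⟩
  · rw [Γ.retraction_gen_of_notMem hEven hvS]
    exact one_mem _

end ArtinGraph

open ArtinGraph in
/-- in an even Artin group, `G_A ∩ G_B = G_{A ∩ B}`. -/
theorem stmt1 {V : Type} (Γ : ArtinGraph V) (hEven : Γ.IsEven) (A B : Set V) :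
    Γ.std A ⊓ Γ.std B = Γ.std (A ∩ B) := by
  refine le_antisymm ?_ (le_inf (Γ.std_mono Set.inter_subset_left)
    (Γ.std_mono Set.inter_subset_right))
  rintro g ⟨hgA, hgB⟩
  rw [← Γ.retraction_apply_of_mem_std hEven hgA]
  exact Γ.map_retraction_std_le hEven A B ⟨g, hgB, rfl⟩
end

section
/- Let Γ be an even Artin graph with Artin group G, A, B ⊆ V, and f, g ∈ G. If fG_Af^{-1} = gG_Bg^{-1}, then A = B. Consequently, for any parabolic subgroup K of G there is a unique subset S ⊆ V such that K is conjugate to G_S. -/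
namespace ArtinGraph

variable {V : Type}

theorem lift_word_two_mul {H : Type*} [Group H] (x : V → H) (k : ℕ) (u v : V) :
    FreeGroup.lift x (word u v (2 * k)) = (x u * x v) ^ k := by
  induction k generalizing u v with
  | zero => simp [word]
  | succ k ih =>
    rw [show 2 * (k + 1) = 2 * k + 1 + 1 by ring, word, word, map_mul, map_mul,
      FreeGroup.lift_apply_of, FreeGroup.lift_apply_of, ih, pow_succ', mul_assoc]

namespace IsEven

variable {Γ : ArtinGraph V}

theorem lift_eq_one_of_mem_rels (hΓ : Γ.IsEven) {H : Type*} [CommGroup H] (x : V → H)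
    {r : FreeGroup V} (hr : r ∈ Γ.rels) : FreeGroup.lift x r = 1 := by
  obtain ⟨u, v, -, rfl⟩ := hr
  obtain ⟨k, hk⟩ := hΓ u v
  rw [hk, ← two_mul, map_mul, map_inv, lift_word_two_mul, lift_word_two_mul, mul_comm (x v),
    mul_inv_cancel]

/-- Well defined because, the labels being even, each relation becomes `(uv)^k = (vu)^k`,
which holds in any commutative group. -/
def lift (hΓ : Γ.IsEven) {H : Type*} [CommGroup H] (x : V → H) : Γ.ArtinGroup →* H :=
  PresentedGroup.toGroup fun _ ↦ hΓ.lift_eq_one_of_mem_rels x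

@[simp]
theorem lift_gen (hΓ : Γ.IsEven) {H : Type*} [CommGroup H] (x : V → H) (v : V) :
    hΓ.lift x (Γ.gen v) = x v :=
  PresentedGroup.toGroup.of _

end IsEven

theorem std_le_ker_iff (Γ : ArtinGraph V) {H : Type*} [Group H] (φ : Γ.ArtinGroup →* H)
    (S : Set V) : Γ.std S ≤ φ.ker ↔ ∀ v ∈ S, φ (Γ.gen v) = 1 := by
  simp [std, Subgroup.closure_le, Set.subset_def]

theorem conjP_le_iff_of_normal {G : Type*} [Group G] (g : G) {H N : Subgroup G} [N.Normal] :
    conjP g H ≤ N ↔ H ≤ N := by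
  refine ⟨fun h x hx ↦ ?_, fun h ↦ ?_⟩
  · have hconj : g * x * g⁻¹ ∈ N := h ⟨x, hx, rfl⟩
    simpa [mul_assoc] using ‹N.Normal›.conj_mem _ hconj g⁻¹
  · rw [← Subgroup.Normal.map_conj_eq N g]
    exact Subgroup.map_mono h

/-- The exponent sum of `v`, a homomorphism to `ℤ`, kills every conjugate of `G_B` when
`v ∉ B`, but not the generator `v`. -/
theorem subset_of_conjP_std_le {Γ : ArtinGraph V} (hΓ : Γ.IsEven) {A B : Set V}
    {f g : Γ.ArtinGroup} (h : conjP f (Γ.std A) ≤ conjP g (Γ.std B)) : A ⊆ B := by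
  classical
  intro v hvA
  by_contra hvB
  let φ := hΓ.lift (Pi.mulSingle v (Multiplicative.ofAdd (1 : ℤ)))
  have hB : Γ.std B ≤ φ.ker := by
    rw [std_le_ker_iff]
    intro u hu
    simp [φ, Pi.mulSingle_eq_of_ne (ne_of_mem_of_not_mem hu hvB)]
  have hA : Γ.std A ≤ φ.ker :=
    (conjP_le_iff_of_normal f).1 (h.trans ((conjP_le_iff_of_normal g).2 hB))
  have hv : φ (Γ.gen v) = 1 := (std_le_ker_iff Γ φ A).1 hA v hvA
  simp [φ] at hv

theorem eq_of_conjP_std_eq {Γ : ArtinGraph V} (hΓ : Γ.IsEven) {A B : Set V}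
    {f g : Γ.ArtinGroup} (h : conjP f (Γ.std A) = conjP g (Γ.std B)) : A = B :=
  (subset_of_conjP_std_le hΓ h.le).antisymm (subset_of_conjP_std_le hΓ h.ge)

end ArtinGraph

open ArtinGraph in
/-- in an even Artin group, `fG_Af⁻¹ = gG_Bg⁻¹` implies `A = B`;
consequently every parabolic subgroup is conjugate to `G_S` for a unique `S`. -/
theorem stmt5 {V : Type} (Γ : ArtinGraph V) (hEven : Γ.IsEven) :
    (∀ (A B : Set V) (f g : Γ.ArtinGroup),
        conjP f (Γ.std A) = conjP g (Γ.std B) → A = B) ∧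
    ∀ K : Subgroup Γ.ArtinGroup, Γ.IsParabolic K →
      ∃! S : Set V, ∃ g : Γ.ArtinGroup, K = conjP g (Γ.std S) := by
  refine ⟨fun A B f g ↦ eq_of_conjP_std_eq hEven, ?_⟩
  rintro K ⟨S, g, hK⟩
  exact ⟨S, ⟨g, hK⟩, fun S' ⟨g', hK'⟩ ↦ eq_of_conjP_std_eq hEven (hK'.symm.trans hK)⟩
end

section
/- In the Artin group G = ⟨a, x | (ax)^k = (xa)^k⟩ (edge label 2k), write a_i = x^i a x^{-i} and σ_a = a_0 a_1 ⋯ a_{k-1}. Then for every l ∈ ℤ, a_l = σ_a^{-q} a_r σ_a^{q}, where l = kq + r with 0 ≤ r < k. -/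
open ArtinGraph in
/-- The even Artin graph on two vertices `a = false`, `x = true`, label `2k`. -/
def edgeGraph (k : ℕ) : ArtinGraph Bool where
  m u v := if u = v then 0 else 2 * k
  symm u v := by rcases u <;> rcases v <;> rfl
  loopless v := by simp
  ne_one u v := by rcases u <;> rcases v <;> simp <;> omega

open ArtinGraph in
/-- `a_i = xⁱ a x⁻ⁱ` in the dihedral Artin group. -/
def aSub (k : ℕ) (i : ℤ) : (edgeGraph k).ArtinGroup :=
  ((edgeGraph k).gen true) ^ i * (edgeGraph k).gen false *
    (((edgeGraph k).gen true) ^ i)⁻¹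

open ArtinGraph in
/-- `σ_a = a_0 a_1 ⋯ a_{k-1}`. -/
def sigmaA (k : ℕ) : (edgeGraph k).ArtinGroup :=
  ((List.range k).map fun i => aSub k (i : ℤ)).prod

/-
Put `Δ = (ax)ᵏ`. Telescoping gives `σ_a = Δ x⁻ᵏ`, and the relation `(ax)ᵏ = (xa)ᵏ` says that
`Δ` commutes with both generators, so `Δ` is central. Hence conjugating by `σ_a` is the same as
conjugating by `x⁻ᵏ`, and `σ_a^{-q} a_r σ_a^q = x^{kq} a_r x^{-kq} = a_{kq+r}`.
-/

section Group

variable {G : Type*} [Group G]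

theorem prod_range_map_zpow_conj (a x : G) (n : ℕ) :
    ((List.range n).map fun i : ℕ => x ^ (i : ℤ) * a * (x ^ (i : ℤ))⁻¹).prod =
      (a * x) ^ n * (x ^ n)⁻¹ := by
  induction n with
  | zero => simp
  | succ n ih =>
    rw [List.range_succ, List.map_append, List.prod_append, ih]
    simp only [List.map_singleton, List.prod_singleton, zpow_natCast, pow_succ]
    group

theorem pow_mul_mem_center_of_pow_mul_eq {a x : G} (hgen : Subgroup.closure {a, x} = ⊤) {n : ℕ}
    (h : (a * x) ^ n = (x * a) ^ n) : (a * x) ^ n ∈ Subgroup.center G := by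
  rw [← Subgroup.centralizer_univ, ← Subgroup.coe_top, ← hgen, Subgroup.centralizer_closure,
    Subgroup.mem_centralizer_iff]
  rintro g (rfl | rfl)
  · nth_rw 1 [h]
    exact (mul_pow_mul g x n).symm
  · rw [← mul_pow_mul, h]

theorem mul_zpow_conj_of_mem_center {c : G} (hc : c ∈ Subgroup.center G) (y g : G) (q : ℤ) :
    (c * y) ^ (-q) * g * (c * y) ^ q = y ^ (-q) * g * y ^ q := by
  have hcy : Commute c y := (Subgroup.mem_center_iff.mp hc y).symm
  have hcq := Subgroup.mem_center_iff.mp (Subgroup.zpow_mem _ hc q) (y ^ (-q) * g)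
  calc (c * y) ^ (-q) * g * (c * y) ^ q = (c ^ q)⁻¹ * (y ^ (-q) * g * c ^ q) * y ^ q := by
        rw [hcy.mul_zpow, hcy.mul_zpow]
        group
    _ = y ^ (-q) * g * y ^ q := by
        rw [hcq]
        group

end Group

namespace ArtinGraph

variable {V : Type}

theorem word_two_mul (u v : V) (n : ℕ) :
    word u v (2 * n) = (FreeGroup.of u * FreeGroup.of v) ^ n := by
  induction n generalizing u v with
  | zero => rfl
  | succ n ih =>
    rw [show 2 * (n + 1) = 2 * n + 1 + 1 by ring, word, word, ih, pow_succ']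
    group

theorem mk_word_eq_mk_word (Γ : ArtinGraph V) {u v : V} (h : Γ.m u v ≠ 0) :
    PresentedGroup.mk Γ.rels (word u v (Γ.m u v)) =
      PresentedGroup.mk Γ.rels (word v u (Γ.m u v)) := by
  rw [← mul_inv_eq_one, ← map_inv, ← map_mul]
  exact PresentedGroup.one_of_mem ⟨u, v, h, rfl⟩

end ArtinGraph

theorem edgeGraph_relation (k : ℕ) :
    ((edgeGraph k).gen false * (edgeGraph k).gen true) ^ k =
      ((edgeGraph k).gen true * (edgeGraph k).gen false) ^ k := by
  rcases Nat.eq_zero_or_pos k with rfl | hk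
  · simp
  have hm : (edgeGraph k).m false true = 2 * k := rfl
  have h := (edgeGraph k).mk_word_eq_mk_word (u := false) (v := true) (by omega)
  rwa [hm, ArtinGraph.word_two_mul, ArtinGraph.word_two_mul, map_pow, map_pow, map_mul, map_mul] at h

theorem closure_edgeGraph_gen (k : ℕ) :
    Subgroup.closure {(edgeGraph k).gen false, (edgeGraph k).gen true} = ⊤ := by
  rw [← Bool.range_eq]
  exact PresentedGroup.closure_range_of _

theorem sigmaA_eq (k : ℕ) :
    sigmaA k = ((edgeGraph k).gen false * (edgeGraph k).gen true) ^ k *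
      ((edgeGraph k).gen true ^ k)⁻¹ := by
  rw [← prod_range_map_zpow_conj]
  simp only [sigmaA, bind_pure_comp, List.map_eq_map, List.map_map]
  rfl

open ArtinGraph in
theorem stmt12_general (k : ℕ) (l q r : ℤ)
    (hl : l = k * q + r) :
    aSub k l = (sigmaA k) ^ (-q) * aSub k r * (sigmaA k) ^ q := by
  rw [sigmaA_eq, mul_zpow_conj_of_mem_center (pow_mul_mem_center_of_pow_mul_eq
    (closure_edgeGraph_gen k) (edgeGraph_relation k)), hl, aSub, aSub]
  group

open ArtinGraph in
/-- in `G = ⟨a, x ∣ (ax)^k = (xa)^k⟩`, with `a_i = xⁱax⁻ⁱ` and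
`σ_a = a_0a_1⋯a_{k-1}`, for every `l = kq + r` with `0 ≤ r < k` one has
`a_l = σ_a^{-q} a_r σ_a^{q}`. -/
theorem stmt12 (k : ℕ) (hk : 1 ≤ k) (l q r : ℤ)
    (hl : l = k * q + r) (hr0 : 0 ≤ r) (hrk : r < k) :
    aSub k l = (sigmaA k) ^ (-q) * aSub k r * (sigmaA k) ^ q :=
  stmt12_general k l q r hl
end
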